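/- For θ ∈ (0, π/2) and φ ∈ ℝ, there is no 2×2 (or larger, after padding with zero operators) unitary U such that applying U to the pair K₁ = [[cos θ, sin θ·e^{iφ}],[0,0]], K₂ = [[0,0],[sin θ, -cos θ·e^{iφ}]] yields operators all of which are diagonal, antidiagonal, or matrix-unit multiples. -/

import Mathlib

/-!
The second operator has a vanishing first row, so the first row of the `i`-th mixed operator is
`U i 0` times the first row `(cos θ, sin θ e^{iφ})` of the first one, which has no zero entry.
Both strictly incoherent shapes force an entry of the first row to vanish, hence `U i 0 = 0` for
every `i`; but the first column of a unitary matrix is a unit vector.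
-/

open Matrix Complex

/-- A 2×2 matrix is strictly incoherent: diagonal, antidiagonal, or a
matrix-unit multiple (the latter being a special case of the former two). -/
def SIOform (M : Matrix (Fin 2) (Fin 2) ℂ) : Prop :=
  (M 0 1 = 0 ∧ M 1 0 = 0) ∨ (M 0 0 = 0 ∧ M 1 1 = 0)

theorem SIOform.eq_zero_of_row_zero_eq_smul {A M : Matrix (Fin 2) (Fin 2) ℂ} {c : ℂ}
    (hA : SIOform A) (hrow : ∀ k, A 0 k = c * M 0 k) (h₀ : M 0 0 ≠ 0) (h₁ : M 0 1 ≠ 0) :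
    c = 0 := by
  rcases hA with ⟨hA, -⟩ | ⟨hA, -⟩
  · simpa [hrow, h₁] using hA
  · simpa [hrow, h₀] using hA

theorem Matrix.sum_smul_apply_of_apply_eq_zero {ι m n R : Type*} [Fintype ι]
    [NonUnitalNonAssocSemiring R] (c : ι → R) (K : ι → Matrix m n R) (j₀ : ι) (a : m) (b : n) (hK : ∀ j ≠ j₀, K j a b = 0) :
    (∑ j, c j • K j) a b = c j₀ * K j₀ a b := by
  rw [Matrix.sum_apply, Finset.sum_eq_single_of_mem j₀ (Finset.mem_univ _)]
  · rfl
  · intro j _ hj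
    simp [hK j hj]

theorem Matrix.exists_apply_ne_zero_of_mem_unitaryGroup {n R : Type*} [Fintype n]
    [DecidableEq n] [CommRing R] [StarRing R] [Nontrivial R] {U : Matrix n n R}
    (hU : U ∈ unitaryGroup n R) (j : n) : ∃ i, U i j ≠ 0 := by
  by_contra! h
  have hjj : (star U * U) j j = 1 := by simp [(mem_unitaryGroup_iff').1 hU]
  simp [Matrix.mul_apply, h] at hjj

theorem stmt_10 (θ φ : ℝ) (hθ : θ ∈ Set.Ioo 0 (Real.pi / 2)) :
    let K₁ : Matrix (Fin 2) (Fin 2) ℂ :=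
      !![(Real.cos θ : ℂ), (Real.sin θ : ℂ) * Complex.exp (φ * Complex.I); 0, 0]
    let K₂ : Matrix (Fin 2) (Fin 2) ℂ :=
      !![0, 0; (Real.sin θ : ℂ), -(Real.cos θ : ℂ) * Complex.exp (φ * Complex.I)]
    ∀ n : ℕ, 2 ≤ n →
      ∀ U ∈ Matrix.unitaryGroup (Fin n) ℂ,
        ¬ ∀ i : Fin n, SIOform (∑ j : Fin n,
            U i j • (if (j : ℕ) = 0 then K₁ else if (j : ℕ) = 1 then K₂ else 0)) := by
  intro K₁ K₂ n hn U hU hSIO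
  have hcos : (Real.cos θ : ℂ) ≠ 0 := ofReal_ne_zero.2
    (Real.cos_pos_of_mem_Ioo ⟨by linarith [hθ.1, Real.pi_pos], hθ.2⟩).ne'
  have hsin : (Real.sin θ : ℂ) ≠ 0 := ofReal_ne_zero.2
    (Real.sin_pos_of_pos_of_lt_pi hθ.1 (by linarith [hθ.2, Real.pi_pos])).ne'
  let j₀ : Fin n := ⟨0, by omega⟩
  obtain ⟨i, hi⟩ := exists_apply_ne_zero_of_mem_unitaryGroup hU j₀
  refine hi ((hSIO i).eq_zero_of_row_zero_eq_smul (M := K₁) (fun k => ?_) ?_ ?_)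
  · refine sum_smul_apply_of_apply_eq_zero _ _ j₀ 0 k fun j hj => ?_
    rw [if_neg fun h => hj (Fin.ext h)]
    split_ifs <;> fin_cases k <;> simp [K₂]
  · simpa [K₁] using hcos
  · simpa [K₁] using mul_ne_zero hsin (exp_ne_zero (φ * I))
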